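/- Let 0 < α < 1 and define f : ℝ² → ℝ by f(x) = ‖x‖^α. Then the function x ↦ ‖x‖² · ‖D²f(x)‖², where D²f(x) denotes the second derivative of f at x (a symmetric bilinear map with its operator/Frobenius norm), is integrable on the punctured unit ball {x ∈ ℝ² : 0 < ‖x‖ < 1}. -/

import Mathlib

open MeasureTheory Metric Topology

/-! Away from the origin `‖x‖ ^ α` is smooth; differentiating its gradient `α ‖x‖ ^ (α - 2) ⟪x, ·⟫`
once more gives `‖D²f(x)‖ ≤ C ‖x‖ ^ (α - 2)`. The weighted integrand is therefore at most
`C² ‖x‖ ^ (2α - 2)`, and `‖x‖ ^ (-s)` is integrable near the origin of `ℝᵈ` as soon as `s < d`;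
here `s = 2 - 2α < 2`. -/

section NormRpow

variable {E : Type*} [NormedAddCommGroup E] [InnerProductSpace ℝ E]

/-- `innerSL ℝ` is typed as `starRingEnd ℝ`-semilinear in its first argument; this copy is
`ℝ`-linear, so that it can be added to the other bilinear maps arising as second derivatives. -/
noncomputable def realInnerSL : E →L[ℝ] E →L[ℝ] ℝ := innerSL ℝ

theorem norm_realInnerSL_le : ‖(realInnerSL : E →L[ℝ] E →L[ℝ] ℝ)‖ ≤ 1 := norm_innerSL_le ℝ

theorem hasFDerivAt_norm_rpow_of_ne_zero (p : ℝ) {x : E} (hx : x ≠ 0) :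
    HasFDerivAt (fun y : E ↦ ‖y‖ ^ p) ((p * ‖x‖ ^ (p - 2)) • innerSL ℝ x) x := by
  convert! ((hasStrictFDerivAt_norm_sq x).rpow_const (p := p / 2) (by simp [hx])).hasFDerivAt
    using 0
  simp_rw [← Real.rpow_natCast_mul (norm_nonneg _), ← Nat.cast_smul_eq_nsmul ℝ, smul_smul]
  ring_nf

theorem hasFDerivAt_fderiv_norm_rpow (p : ℝ) {x : E} (hx : x ≠ 0) :
    HasFDerivAt (fderiv ℝ fun y : E ↦ ‖y‖ ^ p)
      ((p * ‖x‖ ^ (p - 2)) • realInnerSL +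
        ((p * ((p - 2) * ‖x‖ ^ (p - 4))) • innerSL ℝ x).smulRight (innerSL ℝ x)) x := by
  have hfderiv : fderiv ℝ (fun y : E ↦ ‖y‖ ^ p) =ᶠ[𝓝 x]
      fun y ↦ (p * ‖y‖ ^ (p - 2)) • innerSL ℝ y := by
    filter_upwards [isOpen_ne.mem_nhds hx] with y hy
    exact (hasFDerivAt_norm_rpow_of_ne_zero p hy).fderiv
  have hcoeff : HasFDerivAt (fun y : E ↦ p * ‖y‖ ^ (p - 2))
      ((p * ((p - 2) * ‖x‖ ^ (p - 4))) • innerSL ℝ x) x := by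
    simpa [smul_smul, show p - 2 - 2 = p - 4 by ring] using
      (hasFDerivAt_norm_rpow_of_ne_zero (p - 2) hx).const_mul p
  exact (hcoeff.smul realInnerSL.hasFDerivAt).congr_of_eventuallyEq hfderiv

theorem norm_iteratedFDeriv_two_norm_rpow_le (p : ℝ) {x : E} (hx : x ≠ 0) :
    ‖iteratedFDeriv ℝ 2 (fun y : E ↦ ‖y‖ ^ p) x‖ ≤ (|p| + |p * (p - 2)|) * ‖x‖ ^ (p - 2) := by
  have hr : ‖x‖ ≠ 0 := norm_ne_zero_iff.mpr hx
  have hsq : ‖x‖ ^ (p - 4) * ‖x‖ * ‖x‖ = ‖x‖ ^ (p - 2) := by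
    rw [show p - 2 = p - 4 + 1 + 1 by ring, Real.rpow_add_one hr, Real.rpow_add_one hr]
  rw [← norm_iteratedFDeriv_fderiv (n := 1), norm_iteratedFDeriv_one,
    (hasFDerivAt_fderiv_norm_rpow p hx).fderiv]
  refine (norm_add_le _ _).trans ?_
  rw [norm_smul, ContinuousLinearMap.norm_smulRight_apply, norm_smul, innerSL_apply_norm,
    Real.norm_eq_abs, Real.norm_eq_abs]
  calc _ ≤ |p * ‖x‖ ^ (p - 2)| + |p * ((p - 2) * ‖x‖ ^ (p - 4))| * ‖x‖ * ‖x‖ := by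
        gcongr
        exact mul_le_of_le_one_right (abs_nonneg _) norm_realInnerSL_le
    _ = (|p| + |p * (p - 2)|) * ‖x‖ ^ (p - 2) := by
        simp only [abs_mul, abs_norm, abs_of_nonneg (Real.rpow_nonneg (norm_nonneg x) _), ← hsq]
        ring

theorem contDiffAt_norm_rpow_of_ne_zero (n : WithTop ℕ∞) (p : ℝ) {x : E} (hx : x ≠ 0) :
    ContDiffAt ℝ n (fun y : E ↦ ‖y‖ ^ p) x :=
  (contDiffAt_norm ℝ hx).rpow_const_of_ne (norm_ne_zero_iff.mpr hx)

theorem continuousOn_iteratedFDeriv_norm_rpow (k : ℕ) (p : ℝ) :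
    ContinuousOn (iteratedFDeriv ℝ k fun y : E ↦ ‖y‖ ^ p) {0}ᶜ := fun _ hx ↦
  ((contDiffAt_norm_rpow_of_ne_zero k p hx).continuousAt_iteratedFDeriv le_rfl).continuousWithinAt

theorem norm_sq_mul_norm_iteratedFDeriv_two_norm_rpow_sq_le (p : ℝ) (x : E) :
    ‖x‖ ^ 2 * ‖iteratedFDeriv ℝ 2 (fun y : E ↦ ‖y‖ ^ p) x‖ ^ 2 ≤
      (|p| + |p * (p - 2)|) ^ 2 * ‖x‖ ^ (-(2 - 2 * p)) := by
  rcases eq_or_ne x 0 with rfl | hx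
  · rw [norm_zero, zero_pow two_ne_zero, zero_mul]
    positivity
  have hr : 0 < ‖x‖ := norm_pos_iff.mpr hx
  calc _ ≤ ‖x‖ ^ 2 * ((|p| + |p * (p - 2)|) * ‖x‖ ^ (p - 2)) ^ 2 := by
        gcongr
        exact norm_iteratedFDeriv_two_norm_rpow_le p hx
    _ = (|p| + |p * (p - 2)|) ^ 2 * (‖x‖ ^ (2 : ℝ) * ‖x‖ ^ ((p - 2) * 2)) := by
        rw [Real.rpow_mul hr.le, Real.rpow_two, Real.rpow_two]
        ring
    _ = (|p| + |p * (p - 2)|) ^ 2 * ‖x‖ ^ (-(2 - 2 * p)) := by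
        rw [← Real.rpow_add hr]
        ring_nf

end NormRpow

theorem integrableOn_ball_norm_sq_mul_norm_iteratedFDeriv_two_norm_rpow_sq
    {E : Type*} [NormedAddCommGroup E] [InnerProductSpace ℝ E] [FiniteDimensional ℝ E]
    [Nontrivial E] [MeasurableSpace E] [BorelSpace E] (μ : Measure E) [μ.IsAddHaarMeasure]
    {p : ℝ} (hp : 2 - 2 * p < Module.finrank ℝ E) (r : ℝ) :
    IntegrableOn (fun x ↦ ‖x‖ ^ 2 * ‖iteratedFDeriv ℝ 2 (fun y : E ↦ ‖y‖ ^ p) x‖ ^ 2)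
      (ball 0 r) μ := by
  refine integrableOn_ball_of_norm_le_rpow (C := (|p| + |p * (p - 2)|) ^ 2) Module.finrank_pos hp
    (.of_forall fun x ↦ ?_) ?_
  · rw [Real.norm_of_nonneg (by positivity)]
    exact norm_sq_mul_norm_iteratedFDeriv_two_norm_rpow_sq_le p x
  · rw [← restrict_compl_singleton (μ := μ) (0 : E)]
    exact (continuous_norm.pow 2).continuousOn.mul
      ((continuousOn_iteratedFDeriv_norm_rpow 2 p).norm.pow 2)
      |>.aestronglyMeasurable (measurableSet_singleton 0).compl

theorem stmt_9_general (α : ℝ) (hα0 : 0 < α)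
    (f : EuclideanSpace ℝ (Fin 2) → ℝ) (hf : ∀ x, f x = ‖x‖ ^ α) :
    IntegrableOn (fun x => ‖x‖ ^ 2 * ‖iteratedFDeriv ℝ 2 f x‖ ^ 2)
      {x : EuclideanSpace ℝ (Fin 2) | 0 < ‖x‖ ∧ ‖x‖ < 1} := by
  obtain rfl : f = fun y ↦ ‖y‖ ^ α := funext hf
  have hdim : 2 - 2 * α < Module.finrank ℝ (EuclideanSpace ℝ (Fin 2)) := by
    rw [finrank_euclideanSpace_fin]
    push_cast
    linarith
  refine (integrableOn_ball_norm_sq_mul_norm_iteratedFDeriv_two_norm_rpow_sq volume hdim 1).mono_set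
    fun x hx ↦ ?_
  exact mem_ball_zero_iff.mpr hx.2

theorem stmt_9 (α : ℝ) (hα0 : 0 < α) (hα1 : α < 1)
    (f : EuclideanSpace ℝ (Fin 2) → ℝ) (hf : ∀ x, f x = ‖x‖ ^ α) :
    IntegrableOn (fun x => ‖x‖ ^ 2 * ‖iteratedFDeriv ℝ 2 f x‖ ^ 2)
      {x : EuclideanSpace ℝ (Fin 2) | 0 < ‖x‖ ∧ ‖x‖ < 1} :=
  stmt_9_general α hα0 f hf
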